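/- arXiv:quant-ph/0312117 — 8 statements merged into one kernel-verified Lean document; each statement's English description precedes it below -/
import Mathlib

section
/- Let N ≥ 1. For any functions x : {1,…,N} × {0,1} → {−1,1} and c : {−1,1}^N → {−1,1}, the sum ∑_{(h_1,…,h_N) ∈ {−1,1}^N} c(h_1,…,h_N) ∏_{i=1}^N (x_i(0) + h_i · x_i(1)) equals either 2^N or −2^N; in particular its absolute value equals 2^N. -/
/-! Each factor `x i 0 + h i * x i 1` vanishes unless `h i = x i 0 * x i 1`, so only one sign
vector contributes to the sum, and there every factor equals `2 * x i 0`. The surviving term is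
therefore `2 ^ N` times a product of units of `ℤ`. -/

open Finset

theorem sum_pi_mul_prod_eq_single {ι β R : Type*} [Fintype ι] [DecidableEq ι] [Fintype β]
    [CommSemiring R] (f : (ι → β) → R) (g : ι → β → R) (σ₀ : ι → β)
    (hg : ∀ i t, t ≠ σ₀ i → g i t = 0) :
    ∑ σ, f σ * ∏ i, g i (σ i) = f σ₀ * ∏ i, g i (σ₀ i) := by
  refine Fintype.sum_eq_single σ₀ fun σ hσ => ?_
  obtain ⟨i, hi⟩ := Function.ne_iff.mp hσ
  rw [prod_eq_zero (mem_univ i) (hg i (σ i) hi), mul_zero]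

namespace Int

theorem add_sign_mul_eq_zero {a b : ℤ} (ha : IsUnit a) (hb : IsUnit b) {t : Bool}
    (ht : t ≠ decide (a ≠ b)) : a + (if t then -1 else 1) * b = 0 := by
  rcases isUnit_iff.mp ha with rfl | rfl <;> rcases isUnit_iff.mp hb with rfl | rfl <;>
    cases t <;> simp_all

theorem add_sign_mul_eq_two_mul {a b : ℤ} (ha : IsUnit a) (hb : IsUnit b) :
    a + (if decide (a ≠ b) then -1 else 1) * b = 2 * a := by
  rcases isUnit_iff.mp ha with rfl | rfl <;> rcases isUnit_iff.mp hb with rfl | rfl <;> decide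

end Int

theorem stmt0_general (N : ℕ) (x : Fin N → Fin 2 → ℤ)
    (hx : ∀ i b, x i b = 1 ∨ x i b = -1)
    (c : (Fin N → ℤ) → ℤ)
    (hc : ∀ h : Fin N → ℤ, (∀ i, h i = 1 ∨ h i = -1) → c h = 1 ∨ c h = -1) :
    ((∑ σ : Fin N → Bool,
        c (fun i => if σ i then -1 else 1) *
          ∏ i, (x i 0 + (if σ i then -1 else 1) * x i 1)) = 2 ^ N ∨
     (∑ σ : Fin N → Bool,
        c (fun i => if σ i then -1 else 1) *
          ∏ i, (x i 0 + (if σ i then -1 else 1) * x i 1)) = -2 ^ N) ∧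
    |∑ σ : Fin N → Bool,
        c (fun i => if σ i then -1 else 1) *
          ∏ i, (x i 0 + (if σ i then -1 else 1) * x i 1)| = 2 ^ N := by
  have hxu : ∀ i b, IsUnit (x i b) := fun i b => Int.isUnit_iff.mpr (hx i b)
  set σ₀ : Fin N → Bool := fun i => decide (x i 0 ≠ x i 1)
  have hcu : IsUnit (c fun i => if σ₀ i then -1 else 1) :=
    Int.isUnit_iff.mpr <| hc _ fun i => by cases σ₀ i <;> simp
  have hsum : ∑ σ : Fin N → Bool, c (fun i => if σ i then -1 else 1) *
        ∏ i, (x i 0 + (if σ i then -1 else 1) * x i 1) =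
      c (fun i => if σ₀ i then -1 else 1) * (2 ^ N * ∏ i, x i 0) := by
    rw [sum_pi_mul_prod_eq_single (fun σ => c fun i => if σ i then -1 else 1)
      (fun i t => x i 0 + (if t then -1 else 1) * x i 1) σ₀
      fun i _ ht => Int.add_sign_mul_eq_zero (hxu i 0) (hxu i 1) ht]
    simp only [σ₀, Int.add_sign_mul_eq_two_mul (hxu _ 0) (hxu _ 1), prod_mul_distrib,
      prod_const, card_univ, Fintype.card_fin]
  have habs : |∑ σ : Fin N → Bool, c (fun i => if σ i then -1 else 1) *
      ∏ i, (x i 0 + (if σ i then -1 else 1) * x i 1)| = 2 ^ N := by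
    rw [hsum, abs_mul, abs_mul, Int.isUnit_iff_abs_eq.mp hcu,
      Int.isUnit_iff_abs_eq.mp (IsUnit.prod_univ_iff.mpr fun i => hxu i 0), abs_pow, abs_two,
      one_mul, mul_one]
  exact ⟨(abs_eq (by positivity)).mp habs, habs⟩

/-- For `N ≥ 1`, any `±1`-valued observables `x i b` and any `±1`-valued
function `c` on sign vectors, the sum
`∑_{h ∈ {-1,1}^N} c(h) ∏ i (x i 0 + h i * x i 1)` equals `±2^N`,
and in particular its absolute value is `2^N`. -/
theorem stmt0 (N : ℕ) (hN : 1 ≤ N) (x : Fin N → Fin 2 → ℤ)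
    (hx : ∀ i b, x i b = 1 ∨ x i b = -1)
    (c : (Fin N → ℤ) → ℤ)
    (hc : ∀ h : Fin N → ℤ, (∀ i, h i = 1 ∨ h i = -1) → c h = 1 ∨ c h = -1) :
    ((∑ σ : Fin N → Bool,
        c (fun i => if σ i then -1 else 1) *
          ∏ i, (x i 0 + (if σ i then -1 else 1) * x i 1)) = 2 ^ N ∨
     (∑ σ : Fin N → Bool,
        c (fun i => if σ i then -1 else 1) *
          ∏ i, (x i 0 + (if σ i then -1 else 1) * x i 1)) = -2 ^ N) ∧
    |∑ σ : Fin N → Bool,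
        c (fun i => if σ i then -1 else 1) *
          ∏ i, (x i 0 + (if σ i then -1 else 1) * x i 1)| = 2 ^ N :=
  stmt0_general N x hx c hc
end

section
/- Let (Ω, μ) be a probability space, N ≥ 1, and for each i ∈ {1,…,N} and b ∈ {0,1} let A_i(b) : Ω → ℝ be a measurable function taking only the values −1 and 1. Let c : {0,…,2^N−1} → {−1,1} and define a_k := ∑_{j=0}^{2^N−1} (−1)^{⟨j,k⟩₂} c_j for 0 ≤ k ≤ 2^N−1. Then |∑_{k=0}^{2^N−1} a_k · ∫_Ω ∏_{i=1}^N A_i(k_i) dμ| ≤ 2^N, where k = (k_1,…,k_N)_2 is the binary expansion of k with N digits k_i ∈ {0,1}. -/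
/-!
Index the settings `k < 2 ^ N` by their digit vectors `x ∈ {0,1}^N`. Swapping the two sums
turns the Bell expression into `∑_y c_y 𝔼[G_y]` with `G_y = ∑_x (-1)^⟨y,x⟩ ∏_i A_i(x_i)`, so it is
bounded by `𝔼[∑_y |G_y|]`. Pointwise, `G_y` factorises as `∏_i (A_i(0) + (-1)^{y_i} A_i(1))`, hence
`∑_y |G_y| = ∏_i (|A_i(0) + A_i(1)| + |A_i(0) - A_i(1)|) = 2^N`, since for `±1` values exactly
one of the two terms in each factor is `2` and the other `0`.
-/

open MeasureTheory

/-- `ip N j k` counts the binary positions `i < N` where both `j` and `k` have digit 1;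
`(-1) ^ ip N j k` realizes `(-1)^⟨j,k⟩₂`. -/
def ip (N j k : ℕ) : ℕ := ∑ i ∈ Finset.range N, (if j.testBit i ∧ k.testBit i then 1 else 0)

open Finset

section Walsh

variable {N : ℕ}

def walsh (y x : Fin N → Fin 2) : ℝ := ∏ i, (-1) ^ ((y i * x i : Fin 2) : ℕ)

lemma testBit_finFunctionFinEquiv (x : Fin N → Fin 2) (i : Fin N) :
    (finFunctionFinEquiv x : ℕ).testBit i = decide (x i = 1) := by
  rw [Nat.testBit_eq_decide_div_mod_eq, ← finFunctionFinEquiv_symm_apply_val,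
    Equiv.symm_apply_apply]
  simp [Fin.ext_iff]

lemma ite_testBit_finFunctionFinEquiv (x : Fin N → Fin 2) (i : Fin N) :
    (if (finFunctionFinEquiv x : ℕ).testBit i then 1 else 0) = x i := by
  rw [testBit_finFunctionFinEquiv]
  generalize x i = b
  fin_cases b <;> rfl

lemma sum_range_two_pow_eq_sum_fin_two {M : Type*} [AddCommMonoid M] (f : ℕ → M) :
    ∑ k ∈ range (2 ^ N), f k = ∑ x : Fin N → Fin 2, f (finFunctionFinEquiv x) := by
  rw [sum_range]
  exact (finFunctionFinEquiv.sum_comp (fun k => f k)).symm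

lemma neg_one_pow_ip_finFunctionFinEquiv (y x : Fin N → Fin 2) :
    (-1 : ℝ) ^ ip N (finFunctionFinEquiv y) (finFunctionFinEquiv x) = walsh y x := by
  rw [ip, ← prod_pow_eq_pow_sum, ← Fin.prod_univ_eq_prod_range]
  refine Fintype.prod_congr _ _ fun i => ?_
  simp only [testBit_finFunctionFinEquiv]
  generalize y i = b; generalize x i = b'
  fin_cases b <;> fin_cases b' <;> simp

lemma sum_walsh_mul_prod (y : Fin N → Fin 2) (v : Fin N → Fin 2 → ℝ) :
    ∑ x, walsh y x * ∏ i, v i (x i) = ∏ i, ∑ b, (-1) ^ ((y i * b : Fin 2) : ℕ) * v i b := by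
  simp only [walsh, ← prod_mul_distrib]
  exact (Fintype.prod_sum fun i b => (-1 : ℝ) ^ ((y i * b : Fin 2) : ℕ) * v i b).symm

lemma abs_add_add_abs_sub_eq_two {u w : ℝ} (hu : u = 1 ∨ u = -1) (hw : w = 1 ∨ w = -1) :
    |u + w| + |u - w| = 2 := by
  rcases hu with rfl | rfl <;> rcases hw with rfl | rfl <;> norm_num

lemma sum_abs_sum_walsh_mul_prod (v : Fin N → Fin 2 → ℝ) (hv : ∀ i b, v i b = 1 ∨ v i b = -1) :
    ∑ y, |∑ x, walsh y x * ∏ i, v i (x i)| = 2 ^ N := by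
  have hfactor : ∀ i, ∑ c : Fin 2, |∑ b : Fin 2, (-1 : ℝ) ^ ((c * b : Fin 2) : ℕ) * v i b| = 2 := by
    intro i
    simpa [Fin.sum_univ_two, sub_eq_add_neg] using abs_add_add_abs_sub_eq_two (hv i 0) (hv i 1)
  simp only [sum_walsh_mul_prod, abs_prod]
  rw [← Fintype.prod_sum (fun i c => |∑ b : Fin 2, (-1 : ℝ) ^ ((c * b : Fin 2) : ℕ) * v i b|)]
  simp only [hfactor, prod_const, card_univ, Fintype.card_fin]

end Walsh

section Bell

variable {Ω : Type*} [MeasurableSpace Ω] {μ : Measure Ω}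

lemma integrable_prod_of_abs_le_one [IsFiniteMeasure μ] {ι : Type*} [Fintype ι] (A : ι → Ω → ℝ)
    (hmeas : ∀ i, Measurable (A i)) (hbound : ∀ i ω, |A i ω| ≤ 1) :
    Integrable (fun ω => ∏ i, A i ω) μ := by
  refine Integrable.of_bound (Finset.measurable_prod _ fun i _ => hmeas i).aestronglyMeasurable 1
    (ae_of_all _ fun ω => ?_)
  rw [Real.norm_eq_abs, abs_prod]
  exact prod_le_one (fun i _ => abs_nonneg _) fun i _ => hbound i ω

lemma abs_sum_transform_mul_integral_le {ι κ : Type*} [Fintype ι] [Fintype κ] (w : ι → ℝ)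
    (hw : ∀ j, |w j| ≤ 1) (M : ι → κ → ℝ) (P : κ → Ω → ℝ) (hP : ∀ k, Integrable (P k) μ) :
    |∑ k, (∑ j, w j * M j k) * ∫ ω, P k ω ∂μ| ≤ ∫ ω, ∑ j, |∑ k, M j k * P k ω| ∂μ := by
  have hMP : ∀ j, Integrable (fun ω => ∑ k, M j k * P k ω) μ := fun j =>
    integrable_finsetSum _ fun k _ => (hP k).const_mul _
  calc |∑ k, (∑ j, w j * M j k) * ∫ ω, P k ω ∂μ|
      = |∑ j, w j * ∫ ω, ∑ k, M j k * P k ω ∂μ| := by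
        simp_rw [integral_finsetSum _ fun k _ => (hP k).const_mul _, integral_const_mul, sum_mul,
          mul_sum, mul_assoc]
        rw [sum_comm]
    _ ≤ ∑ j, |w j * ∫ ω, ∑ k, M j k * P k ω ∂μ| := abs_sum_le_sum_abs _ _
    _ ≤ ∑ j, ∫ ω, |∑ k, M j k * P k ω| ∂μ := sum_le_sum fun j _ => by
        rw [abs_mul]
        exact (mul_le_of_le_one_left (abs_nonneg _) (hw j)).trans abs_integral_le_integral_abs
    _ = ∫ ω, ∑ j, |∑ k, M j k * P k ω| ∂μ := (integral_finsetSum _ fun j _ => (hMP j).abs).symm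

end Bell

theorem stmt1_general {Ω : Type*} [MeasurableSpace Ω] (μ : Measure Ω) [IsProbabilityMeasure μ]
    (N : ℕ)
    (A : Fin N → Fin 2 → Ω → ℝ)
    (hmeas : ∀ i b, Measurable (A i b))
    (hval : ∀ i b ω, A i b ω = 1 ∨ A i b ω = -1)
    (c : ℕ → ℤ) (hc : ∀ j < 2 ^ N, c j = 1 ∨ c j = -1)
    (a : ℕ → ℤ)
    (ha : ∀ k < 2 ^ N, a k = ∑ j ∈ Finset.range (2 ^ N), (-1 : ℤ) ^ ip N j k * c j) :
    |∑ k ∈ Finset.range (2 ^ N),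
        (a k : ℝ) * ∫ ω, (∏ i : Fin N, A i (if k.testBit i.val then 1 else 0) ω) ∂μ|
      ≤ 2 ^ N := by
  have ha' : ∀ x : Fin N → Fin 2,
      (a (finFunctionFinEquiv x) : ℝ) = ∑ y, (c (finFunctionFinEquiv y) : ℝ) * walsh y x := by
    intro x
    rw [ha _ (finFunctionFinEquiv x).isLt, sum_range_two_pow_eq_sum_fin_two]
    push_cast
    simp only [neg_one_pow_ip_finFunctionFinEquiv, mul_comm]
  have hc' : ∀ y : Fin N → Fin 2, |(c (finFunctionFinEquiv y) : ℝ)| ≤ 1 := fun y => by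
    rcases hc _ (finFunctionFinEquiv y).isLt with h | h <;> rw [h] <;> norm_num
  have hA : ∀ i b ω, |A i b ω| ≤ 1 := fun i b ω => by
    rcases hval i b ω with h | h <;> simp [h]
  calc _ = |∑ x, (∑ y, (c (finFunctionFinEquiv y) : ℝ) * walsh y x) *
          ∫ ω, ∏ i, A i (x i) ω ∂μ| := by
        rw [sum_range_two_pow_eq_sum_fin_two]
        simp only [ha', ite_testBit_finFunctionFinEquiv]
    _ ≤ ∫ ω, ∑ y, |∑ x, walsh y x * ∏ i, A i (x i) ω| ∂μ :=
        abs_sum_transform_mul_integral_le _ hc' _ _ fun x =>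
          integrable_prod_of_abs_le_one _ (fun i => hmeas i (x i)) fun i => hA i (x i)
    _ = 2 ^ N := by
        simp [fun ω => sum_abs_sum_walsh_mul_prod (fun i b => A i b ω) fun i b => hval i b ω]

/-- On a probability space, for `±1`-valued measurable observables
`A i b` (`i` a site, `b ∈ {0,1}` an observable choice) and Bell coefficients
`a k = ∑_j (-1)^⟨j,k⟩₂ c j` built from a `±1`-valued `c`, the Bell expression
`|∑_k a_k ∫ ∏_i A_i(k_i) dμ|` is bounded by `2^N`, where `k_i` is the `i`-th binary
digit of `k`. -/
theorem stmt1 {Ω : Type*} [MeasurableSpace Ω] (μ : Measure Ω) [IsProbabilityMeasure μ]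
    (N : ℕ) (hN : 1 ≤ N)
    (A : Fin N → Fin 2 → Ω → ℝ)
    (hmeas : ∀ i b, Measurable (A i b))
    (hval : ∀ i b ω, A i b ω = 1 ∨ A i b ω = -1)
    (c : ℕ → ℤ) (hc : ∀ j < 2 ^ N, c j = 1 ∨ c j = -1)
    (a : ℕ → ℤ)
    (ha : ∀ k < 2 ^ N, a k = ∑ j ∈ Finset.range (2 ^ N), (-1 : ℤ) ^ ip N j k * c j) :
    |∑ k ∈ Finset.range (2 ^ N),
        (a k : ℝ) * ∫ ω, (∏ i : Fin N, A i (if k.testBit i.val then 1 else 0) ω) ∂μ|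
      ≤ 2 ^ N :=
  stmt1_general μ N A hmeas hval c hc a ha
end

section
/- Let N ≥ 1 and let a : {0,…,2^N−1} → ℤ be a Bell coefficient vector for N qubits. Then |a_k| ≤ 2^N for every k, and if |a_k| = 2^N holds for some k, then a_j = 0 for all j ≠ k. -/
/-- `a` is a Bell coefficient vector for `N` qubits: `a k = ∑_j (-1)^⟨j,k⟩₂ c j`
for some `±1`-valued `c`. -/
def IsBellVec (N : ℕ) (a : ℕ → ℤ) : Prop :=
  ∃ c : ℕ → ℤ, (∀ j < 2 ^ N, c j = 1 ∨ c j = -1) ∧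
    ∀ k < 2 ^ N, a k = ∑ j ∈ Finset.range (2 ^ N), (-1 : ℤ) ^ ip N j k * c j

lemma neg_one_pow_ip (N j k : ℕ) :
    (-1 : ℤ) ^ ip N j k
      = ∏ i ∈ Finset.range N, (if j.testBit i ∧ k.testBit i then (-1 : ℤ) else 1) := by
  rw [ip, ← Finset.prod_pow_eq_pow_sum]
  refine Finset.prod_congr rfl fun i _ => ?_
  split <;> simp

lemma neg_one_pow_ip_mul (N j k₁ k₂ : ℕ) :
    (-1 : ℤ) ^ ip N j k₁ * (-1 : ℤ) ^ ip N j k₂ = (-1 : ℤ) ^ ip N j (k₁ ^^^ k₂) := by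
  rw [neg_one_pow_ip, neg_one_pow_ip, neg_one_pow_ip, ← Finset.prod_mul_distrib]
  refine Finset.prod_congr rfl fun i _ => ?_
  rw [Nat.testBit_xor]
  cases j.testBit i <;> cases k₁.testBit i <;> cases k₂.testBit i <;> simp

lemma ip_flip (N i j m : ℕ) (hi : i < N) (hm : m.testBit i = true) :
    (-1 : ℤ) ^ ip N (j ^^^ 2 ^ i) m = -(-1 : ℤ) ^ ip N j m := by
  have hmem : i ∈ Finset.range N := Finset.mem_range.2 hi
  rw [neg_one_pow_ip, neg_one_pow_ip, ← Finset.mul_prod_erase _ _ hmem,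
    ← Finset.mul_prod_erase _ _ hmem]
  have hrest : ∏ x ∈ (Finset.range N).erase i,
      (if (j ^^^ 2 ^ i).testBit x ∧ m.testBit x then (-1 : ℤ) else 1)
      = ∏ x ∈ (Finset.range N).erase i, (if j.testBit x ∧ m.testBit x then (-1 : ℤ) else 1) := by
    refine Finset.prod_congr rfl fun x hx => ?_
    have hxi : i ≠ x := fun h => (Finset.mem_erase.1 hx).1 h.symm
    rw [Nat.testBit_xor, Nat.testBit_two_pow]
    simp [hxi]
  rw [hrest]
  have hbit : (j ^^^ 2 ^ i).testBit i = !j.testBit i := by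
    rw [Nat.testBit_xor, Nat.testBit_two_pow]
    simp
  rw [hbit, hm]
  cases j.testBit i <;> simp <;> ring

lemma sum_orth (N m : ℕ) (hm : m ≠ 0) (hmN : m < 2 ^ N) :
    ∑ j ∈ Finset.range (2 ^ N), (-1 : ℤ) ^ ip N j m = 0 := by
  obtain ⟨i, hi⟩ := Nat.exists_testBit_of_ne_zero hm
  have hiN : i < N := by
    by_contra h
    push_neg at h
    have : m < 2 ^ i := lt_of_lt_of_le hmN (Nat.pow_le_pow_right (by norm_num) h)
    rw [Nat.testBit_lt_two_pow this] at hi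
    exact Bool.false_ne_true hi
  refine Finset.sum_involution (fun j _ => j ^^^ 2 ^ i) ?_ ?_ ?_ ?_
  · intro j _
    rw [ip_flip N i j m hiN hi]; ring
  · intro j _ _ h
    have : (2 : ℕ) ^ i = 0 := by
      have h' := congrArg (j ^^^ ·) h
      simpa [← Nat.xor_assoc] using h'
    exact absurd this (by positivity)
  · intro j hj
    exact Finset.mem_range.2 (Nat.xor_lt_two_pow (Finset.mem_range.1 hj)
      (Nat.pow_lt_pow_right (by norm_num) hiN))
  · intro j _
    simp [Nat.xor_assoc]

/-- Every Bell coefficient vector `a` for `N ≥ 1` qubits satisfies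
`|a k| ≤ 2^N` for every `k < 2^N`, and if `|a k| = 2^N` for some `k`, then
`a j = 0` for all `j ≠ k` (with `j < 2^N`). -/
theorem stmt3 (N : ℕ) (hN : 1 ≤ N) (a : ℕ → ℤ) (ha : IsBellVec N a) :
    (∀ k < 2 ^ N, |a k| ≤ 2 ^ N) ∧
    ∀ k < 2 ^ N, |a k| = 2 ^ N → ∀ j < 2 ^ N, j ≠ k → a j = 0 := by
  obtain ⟨c, hc1, hc2⟩ := ha
  have habs : ∀ j < 2 ^ N, ∀ k : ℕ, |(-1 : ℤ) ^ ip N j k * c j| = 1 := by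
    intro j hj k
    rw [abs_mul, abs_pow, abs_neg, abs_one, one_pow, one_mul]
    rcases hc1 j hj with h | h <;> simp [h]
  constructor
  · intro k hk
    rw [hc2 k hk]
    calc |∑ j ∈ Finset.range (2 ^ N), (-1 : ℤ) ^ ip N j k * c j|
        ≤ ∑ j ∈ Finset.range (2 ^ N), |(-1 : ℤ) ^ ip N j k * c j| :=
          Finset.abs_sum_le_sum_abs _ _
      _ = ∑ j ∈ Finset.range (2 ^ N), 1 := by
          refine Finset.sum_congr rfl fun j hj => habs j (Finset.mem_range.1 hj) k
      _ = 2 ^ N := by simp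
  · intro k hk hak j hj hjk
    -- pick sign ε
    set ε : ℤ := if 0 ≤ a k then 1 else -1 with hε
    have hεa : ε * a k = 2 ^ N := by
      rcases abs_eq (by positivity : (0:ℤ) ≤ 2 ^ N) |>.1 hak with h | h
      · rw [hε, if_pos (h ▸ by positivity), one_mul, h]
      · rw [hε, if_neg (by rw [h, not_le, neg_lt_zero]; positivity), h]; ring
    have hεsq : ε * ε = 1 := by rcases ite_eq_or_eq (0 ≤ a k) (1:ℤ) (-1) with h | h <;>
      rw [hε, h] <;> ring
    -- all terms equal ε
    have hsum : ∑ i ∈ Finset.range (2 ^ N), ε * ((-1 : ℤ) ^ ip N i k * c i)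
        = ∑ i ∈ Finset.range (2 ^ N), (1 : ℤ) := by
      rw [← Finset.mul_sum, ← hc2 k hk, hεa]
      simp
    have hle : ∀ i ∈ Finset.range (2 ^ N), ε * ((-1 : ℤ) ^ ip N i k * c i) ≤ 1 := by
      intro i hi
      have h1 : |ε * ((-1 : ℤ) ^ ip N i k * c i)| = 1 := by
        rw [abs_mul, habs i (Finset.mem_range.1 hi) k]
        rcases ite_eq_or_eq (0 ≤ a k) (1:ℤ) (-1) with h | h <;> rw [hε, h] <;> simp
      calc ε * ((-1 : ℤ) ^ ip N i k * c i) ≤ |ε * ((-1 : ℤ) ^ ip N i k * c i)| := le_abs_self _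
        _ = 1 := h1
    have hall := (Finset.sum_eq_sum_iff_of_le hle).1 hsum
    have hc : ∀ i ∈ Finset.range (2 ^ N), c i = ε * (-1 : ℤ) ^ ip N i k := by
      intro i hi
      have h := hall i hi
      have hpow : (-1 : ℤ) ^ ip N i k * (-1 : ℤ) ^ ip N i k = 1 := by
        rcases neg_one_pow_eq_or ℤ (ip N i k) with hp | hp <;> rw [hp] <;> ring
      have := congrArg (fun x => ε * (-1 : ℤ) ^ ip N i k * x) h
      simp only [mul_one] at this
      calc c i = ε * ε * ((-1 : ℤ) ^ ip N i k * (-1 : ℤ) ^ ip N i k) * c i := by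
            rw [hεsq, hpow]; ring
        _ = ε * (-1 : ℤ) ^ ip N i k * (ε * ((-1 : ℤ) ^ ip N i k * c i)) := by ring
        _ = ε * (-1 : ℤ) ^ ip N i k := by rw [h, mul_one]
    -- compute a j
    rw [hc2 j hj]
    have : ∑ i ∈ Finset.range (2 ^ N), (-1 : ℤ) ^ ip N i j * c i
        = ε * ∑ i ∈ Finset.range (2 ^ N), (-1 : ℤ) ^ ip N i (j ^^^ k) := by
      rw [Finset.mul_sum]
      refine Finset.sum_congr rfl fun i hi => ?_
      rw [hc i hi, ← neg_one_pow_ip_mul]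
      ring
    rw [this, sum_orth N (j ^^^ k) (fun h => hjk (by simpa [Nat.xor_assoc, Nat.xor_self] using congrArg (· ^^^ k) h))
      (Nat.xor_lt_two_pow hj hk), mul_zero]
end

section
/- Let N ≥ 1. The set of polynomials {B_{uv}^{(N)}(z) : 0 ≤ u, v < 2^{2^{N−1}}} equals the set of all polynomials (1/2)·∑_{k=0}^{2^N−1} a_k z^k where a ranges over all Bell coefficient vectors for N qubits (every such a has all entries even, so these are integer polynomials). -/
/-- `bitd n i` is the `i`-th binary digit of `n` (0 or 1). -/
def bitd (n i : ℕ) : ℕ := if n.testBit i then 1 else 0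

/-- The polynomial `s_k^{(N)}(z) = ∏_{i=0}^{N-2} (1 + (-1)^{k_i} z^{2^{i+1}})`
(the empty product, for `N = 1`, being `1`). -/
noncomputable def sPoly (N k : ℕ) : Polynomial ℤ :=
  ∏ i ∈ Finset.range (N - 1),
    (1 + Polynomial.C ((-1 : ℤ) ^ bitd k i) * Polynomial.X ^ (2 ^ (i + 1)))

/-- The Bell polynomial `B_{uv}^{(N)}(z) = ∑_{k<2^{N-1}} (-1)^{u_k} z^{v_k} s_k^{(N)}(z)`. -/
noncomputable def BPoly (N u v : ℕ) : Polynomial ℤ :=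
  ∑ k ∈ Finset.range (2 ^ (N - 1)),
    Polynomial.C ((-1 : ℤ) ^ bitd u k) * Polynomial.X ^ bitd v k * sPoly N k

open Polynomial Finset

lemma bitd_le_one (n i : ℕ) : bitd n i ≤ 1 := by unfold bitd; split <;> simp

lemma sum_range_two_mul {M : Type*} [AddCommMonoid M] (n : ℕ) (f : ℕ → M) :
    ∑ j ∈ range (2 * n), f j = ∑ m ∈ range n, (f (2 * m) + f (2 * m + 1)) := by
  induction n with
  | zero => simp
  | succ n ih =>
    rw [Finset.sum_range_succ, ← ih, Nat.mul_succ,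
      show 2 * n + 2 = (2 * n + 1) + 1 from rfl, Finset.sum_range_succ,
      Finset.sum_range_succ, add_assoc]

lemma sum_pm (N j : ℕ) :
    ∑ k ∈ range (2 ^ N), Polynomial.C ((-1 : ℤ) ^ ip N j k) * Polynomial.X ^ k
      = ∏ i ∈ range N, (1 + Polynomial.C ((-1 : ℤ) ^ bitd j i) * Polynomial.X ^ (2 ^ i)) := by
  induction N with
  | zero => simp [ip]
  | succ N ih =>
    have hip₁ : ∀ k < 2 ^ N, ip (N + 1) j k = ip N j k := by
      intro k hk
      unfold ip
      rw [Finset.sum_range_succ, Nat.testBit_eq_false_of_lt hk]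
      simp
    have hip₂ : ∀ k < 2 ^ N, ip (N + 1) j (2 ^ N + k) = ip N j k + bitd j N := by
      intro k hk
      unfold ip bitd
      rw [Finset.sum_range_succ]
      congr 1
      · exact Finset.sum_congr rfl fun i hi => by
          rw [Nat.testBit_two_pow_add_gt (Finset.mem_range.mp hi)]
      · rw [Nat.testBit_two_pow_add_eq, Nat.testBit_eq_false_of_lt hk]
        simp
    rw [Finset.prod_range_succ, ← ih, pow_succ, mul_two, Finset.sum_range_add, mul_add, mul_one]
    congr 1
    · exact Finset.sum_congr rfl fun k hk => by rw [hip₁ k (Finset.mem_range.mp hk)]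
    · rw [Finset.sum_mul]
      refine Finset.sum_congr rfl fun k hk => ?_
      rw [hip₂ k (Finset.mem_range.mp hk), pow_add, map_mul, pow_add]
      ring

lemma prod_split (N j : ℕ) (hN : 1 ≤ N) :
    ∏ i ∈ range N, (1 + Polynomial.C ((-1 : ℤ) ^ bitd j i) * Polynomial.X ^ (2 ^ i))
      = (1 + Polynomial.C ((-1 : ℤ) ^ bitd j 0) * Polynomial.X) * sPoly N (j / 2) := by
  obtain ⟨n, rfl⟩ : ∃ n, N = n + 1 := ⟨N - 1, (Nat.succ_pred_eq_of_pos hN).symm⟩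
  rw [Finset.prod_range_succ', mul_comm]
  unfold sPoly
  simp only [Nat.add_sub_cancel]
  congr 1
  · norm_num
  · refine Finset.prod_congr rfl fun i _ => ?_
    have hb : bitd (j / 2) i = bitd j (i + 1) := by
      unfold bitd; rw [Nat.testBit_add_one]
    rw [hb]

lemma perm_id (e f : ℕ) (hf : f ≤ 1) :
    Polynomial.C ((-1 : ℤ) ^ e) * (1 + Polynomial.X)
      + Polynomial.C ((-1 : ℤ) ^ (e + f)) * (1 - Polynomial.X)
      = 2 * (Polynomial.C ((-1 : ℤ) ^ e) * Polynomial.X ^ f) := by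
  interval_cases f
  · simp; ring
  · rw [pow_succ, map_mul]; simp; ring

lemma key (N : ℕ) (hN : 1 ≤ N) (c : ℕ → ℤ) :
    ∑ k ∈ range (2 ^ N),
        Polynomial.C (∑ j ∈ range (2 ^ N), (-1 : ℤ) ^ ip N j k * c j) * Polynomial.X ^ k
      = ∑ m ∈ range (2 ^ (N - 1)),
          (Polynomial.C (c (2 * m)) * (1 + Polynomial.X)
            + Polynomial.C (c (2 * m + 1)) * (1 - Polynomial.X)) * sPoly N m := by
  have h1 : ∑ k ∈ range (2 ^ N),
      Polynomial.C (∑ j ∈ range (2 ^ N), (-1 : ℤ) ^ ip N j k * c j) * Polynomial.X ^ k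
      = ∑ j ∈ range (2 ^ N), Polynomial.C (c j)
          * ∏ i ∈ range N, (1 + Polynomial.C ((-1 : ℤ) ^ bitd j i) * Polynomial.X ^ (2 ^ i)) := by
    simp only [map_sum, Finset.sum_mul]
    rw [Finset.sum_comm]
    refine Finset.sum_congr rfl fun j _ => ?_
    rw [← sum_pm N j, Finset.mul_sum]
    refine Finset.sum_congr rfl fun k _ => ?_
    rw [map_mul]
    ring
  rw [h1]
  have hpow : 2 ^ N = 2 * 2 ^ (N - 1) := by
    rw [← pow_succ']
    congr 1
    omega
  rw [hpow, sum_range_two_mul]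
  refine Finset.sum_congr rfl fun m _ => ?_
  have e1 : 2 * m / 2 = m := by omega
  have e2 : (2 * m + 1) / 2 = m := by omega
  have b1 : bitd (2 * m) 0 = 0 := by
    have h : ¬ (2 * m) % 2 = 1 := by omega
    simp [bitd, Nat.testBit_zero, h]
  have b2 : bitd (2 * m + 1) 0 = 1 := by
    have h : (2 * m + 1) % 2 = 1 := by omega
    simp [bitd, Nat.testBit_zero, h]
  rw [prod_split N (2 * m) hN, prod_split N (2 * m + 1) hN, e1, e2, b1, b2]
  simp only [pow_zero, pow_one, map_one, map_neg]
  ring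

lemma bits_lt (n : ℕ) (g : ℕ → ℕ) (hg : ∀ m, g m ≤ 1) :
    ∑ m ∈ range n, g m * 2 ^ m < 2 ^ n := by
  induction n with
  | zero => simp
  | succ n ih =>
    rw [Finset.sum_range_succ, pow_succ]
    have h1 := hg n
    have h2 : g n * 2 ^ n ≤ 2 ^ n := by
      calc g n * 2 ^ n ≤ 1 * 2 ^ n := Nat.mul_le_mul_right _ h1
        _ = 2 ^ n := one_mul _
    omega

lemma bits_testBit (g : ℕ → ℕ) (hg : ∀ m, g m ≤ 1) (n i : ℕ) (hi : i < n) :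
    bitd (∑ m ∈ range n, g m * 2 ^ m) i = g i := by
  have hA : ∑ m ∈ range i, g m * 2 ^ m < 2 ^ i := bits_lt i g hg
  have hsplit : ∑ m ∈ range n, g m * 2 ^ m
      = ∑ m ∈ range (i + 1), g m * 2 ^ m + ∑ m ∈ Finset.Ico (i + 1) n, g m * 2 ^ m := by
    rw [Finset.range_eq_Ico, ← Finset.sum_Ico_consecutive _ (Nat.zero_le (i + 1)) hi,
      ← Finset.range_eq_Ico]
  have hdvd : (2 : ℕ) ^ (i + 1) ∣ ∑ m ∈ Finset.Ico (i + 1) n, g m * 2 ^ m :=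
    Finset.dvd_sum fun m hm => (pow_dvd_pow 2 (Finset.mem_Ico.mp hm).1).mul_left (g m)
  obtain ⟨T, hT⟩ := hdvd
  have hdiv : (∑ m ∈ range n, g m * 2 ^ m) / 2 ^ i % 2 = g i := by
    rw [hsplit, hT, Finset.sum_range_succ]
    have heq : ∑ m ∈ range i, g m * 2 ^ m + g i * 2 ^ i + 2 ^ (i + 1) * T
        = ∑ m ∈ range i, g m * 2 ^ m + (g i + 2 * T) * 2 ^ i := by
      rw [pow_succ]
      ring
    rw [heq, Nat.add_mul_div_right _ _ (Nat.two_pow_pos i),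
      Nat.div_eq_of_lt hA, zero_add]
    have := hg i
    omega
  unfold bitd
  rw [Nat.testBit_eq_decide_div_mod_eq, hdiv]
  have := hg i
  interval_cases h : g i <;> simp

/-- For `N ≥ 1`, every Bell coefficient vector has all entries even,
and the set of Bell polynomials `B_{uv}^{(N)}` (`0 ≤ u, v < 2^{2^{N-1}}`) equals the
set of all polynomials `(1/2)·∑_{k<2^N} a_k z^k` with `a` a Bell coefficient vector,
i.e. of the polynomials `B` with `2·B = ∑_{k<2^N} a_k z^k` for such an `a`. -/
theorem stmt11 (N : ℕ) (hN : 1 ≤ N) :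
    (∀ a : ℕ → ℤ, IsBellVec N a → ∀ k < 2 ^ N, 2 ∣ a k) ∧
    {B : Polynomial ℤ | ∃ u < 2 ^ 2 ^ (N - 1), ∃ v < 2 ^ 2 ^ (N - 1), B = BPoly N u v} =
      {B : Polynomial ℤ | ∃ a : ℕ → ℤ, IsBellVec N a ∧
        2 * B = ∑ k ∈ Finset.range (2 ^ N), Polynomial.C (a k) * Polynomial.X ^ k} := by
  have hpow : 2 ^ N = 2 * 2 ^ (N - 1) := by
    rw [← pow_succ']
    congr 1
    omega
  constructor
  · rintro a ⟨c, hc, ha⟩ k hk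
    rw [ha k hk]
    have h2 : (2 : ℤ) ∣ ∑ j ∈ range (2 ^ N), ((-1 : ℤ) ^ ip N j k * c j - 1) := by
      refine Finset.dvd_sum fun j hj => ?_
      rcases neg_one_pow_eq_or ℤ (ip N j k) with h | h <;>
        rcases hc j (Finset.mem_range.mp hj) with h' | h' <;>
          simp [h, h']
    have hsum : ∑ j ∈ range (2 ^ N), (-1 : ℤ) ^ ip N j k * c j
        = (∑ j ∈ range (2 ^ N), ((-1 : ℤ) ^ ip N j k * c j - 1)) + 2 ^ N := by
      rw [Finset.sum_sub_distrib]
      simp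
    rw [hsum]
    exact dvd_add h2 (dvd_pow_self 2 (by omega : N ≠ 0))
  · ext B
    simp only [Set.mem_setOf_eq]
    constructor
    · rintro ⟨u, hu, v, hv, rfl⟩
      set c : ℕ → ℤ := fun j => (-1 : ℤ) ^ (bitd u (j / 2) + j % 2 * bitd v (j / 2)) with hcdef
      refine ⟨fun k => ∑ j ∈ Finset.range (2 ^ N), (-1 : ℤ) ^ ip N j k * c j,
        ⟨c, fun j _ => neg_one_pow_eq_or ℤ _, fun k _ => rfl⟩, ?_⟩
      rw [key N hN c]
      unfold BPoly
      rw [Finset.mul_sum]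
      refine (Finset.sum_congr rfl fun m _ => ?_).symm
      have e1 : 2 * m / 2 = m := by omega
      have e2 : (2 * m + 1) / 2 = m := by omega
      have e3 : 2 * m % 2 = 0 := by omega
      have e4 : (2 * m + 1) % 2 = 1 := by omega
      have h1 : c (2 * m) = (-1 : ℤ) ^ bitd u m := by
        rw [hcdef]
        simp only [e1, e3]
        ring
      have h2 : c (2 * m + 1) = (-1 : ℤ) ^ (bitd u m + bitd v m) := by
        rw [hcdef]
        simp only [e2, e4, one_mul]
      rw [h1, h2, perm_id _ _ (bitd_le_one v m)]
      ring
    · rintro ⟨a, ⟨c, hc, ha⟩, hB⟩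
      set g1 : ℕ → ℕ := fun m => if c (2 * m) = -1 then 1 else 0 with hg1def
      set g2 : ℕ → ℕ := fun m => if c (2 * m + 1) = c (2 * m) then 0 else 1 with hg2def
      have hg1 : ∀ m, g1 m ≤ 1 := fun m => by rw [hg1def]; dsimp only; split <;> simp
      have hg2 : ∀ m, g2 m ≤ 1 := fun m => by rw [hg2def]; dsimp only; split <;> simp
      refine ⟨∑ m ∈ range (2 ^ (N - 1)), g1 m * 2 ^ m, bits_lt _ g1 hg1,
        ∑ m ∈ range (2 ^ (N - 1)), g2 m * 2 ^ m, bits_lt _ g2 hg2, ?_⟩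
      have h2B : 2 * B = 2 * BPoly N (∑ m ∈ range (2 ^ (N - 1)), g1 m * 2 ^ m)
          (∑ m ∈ range (2 ^ (N - 1)), g2 m * 2 ^ m) := by
        rw [hB]
        have hstep : ∑ k ∈ Finset.range (2 ^ N), Polynomial.C (a k) * Polynomial.X ^ k
            = ∑ k ∈ range (2 ^ N),
                Polynomial.C (∑ j ∈ range (2 ^ N), (-1 : ℤ) ^ ip N j k * c j)
                  * Polynomial.X ^ k :=
          Finset.sum_congr rfl fun k hk => by rw [ha k (Finset.mem_range.mp hk)]
        rw [hstep, key N hN c]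
        unfold BPoly
        rw [Finset.mul_sum]
        refine Finset.sum_congr rfl fun m hm => ?_
        have hm' := Finset.mem_range.mp hm
        have hb1 : bitd (∑ m ∈ range (2 ^ (N - 1)), g1 m * 2 ^ m) m = g1 m :=
          bits_testBit g1 hg1 _ m hm'
        have hb2 : bitd (∑ m ∈ range (2 ^ (N - 1)), g2 m * 2 ^ m) m = g2 m :=
          bits_testBit g2 hg2 _ m hm'
        have hlt1 : 2 * m < 2 ^ N := by omega
        have hlt2 : 2 * m + 1 < 2 ^ N := by omega
        have h1 : c (2 * m) = (-1 : ℤ) ^ g1 m := by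
          rcases hc (2 * m) hlt1 with h | h <;> rw [hg1def] <;> simp [h]
        have h2 : c (2 * m + 1) = (-1 : ℤ) ^ (g1 m + g2 m) := by
          rcases hc (2 * m) hlt1 with h | h <;> rcases hc (2 * m + 1) hlt2 with h' | h' <;>
            rw [hg1def, hg2def] <;> simp [h, h']
        rw [hb1, hb2, h1, h2, perm_id _ _ (hg2 m)]
        ring
      have h2ne : (2 : Polynomial ℤ) ≠ 0 := by norm_num
      exact mul_left_cancel₀ h2ne h2B
end

section
/- Let N ≥ 1 and 0 ≤ u, v < 2^{2^{N−1}} with binary digits u_k, v_k. Then B_{uv}^{(N)}(1) = (−1)^{u_0} · 2^{N−1}, B_{uv}^{(N)}(−1) = (−1)^{u_0 + v_0} · 2^{N−1}, and B_{uv}^{(N)}(0) = ∑_{k=0}^{2^{N−1}−1} (−1)^{u_k} (1 − v_k). -/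
/-- For `N ≥ 1` and `u, v < 2^{2^{N-1}}` with binary digits `u_k, v_k`:
`B_{uv}^{(N)}(1) = (-1)^{u_0} 2^{N-1}`, `B_{uv}^{(N)}(-1) = (-1)^{u_0+v_0} 2^{N-1}`,
and `B_{uv}^{(N)}(0) = ∑_{k<2^{N-1}} (-1)^{u_k} (1 - v_k)`. -/
theorem stmt12 (N u v : ℕ) (hN : 1 ≤ N)
    (hu : u < 2 ^ 2 ^ (N - 1)) (hv : v < 2 ^ 2 ^ (N - 1)) :
    (BPoly N u v).eval 1 = (-1 : ℤ) ^ bitd u 0 * 2 ^ (N - 1) ∧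
    (BPoly N u v).eval (-1) = (-1 : ℤ) ^ (bitd u 0 + bitd v 0) * 2 ^ (N - 1) ∧
    (BPoly N u v).eval 0 =
      ∑ k ∈ Finset.range (2 ^ (N - 1)), (-1 : ℤ) ^ bitd u k * (1 - (bitd v k : ℤ)) := by
  have hbit0 : ∀ i, bitd 0 i = 0 := by simp [bitd]
  -- sPoly evaluated at z with z^(2^(i+1)) = 1 (works for z = 1 and z = -1)
  have hs : ∀ (z : ℤ), (∀ m : ℕ, z ^ (2 ^ (m + 1)) = 1) →
      ∀ k ∈ Finset.range (2 ^ (N - 1)),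
        (sPoly N k).eval z = if k = 0 then 2 ^ (N - 1) else 0 := by
    intro z hz k hk
    simp only [sPoly, Polynomial.eval_prod, Polynomial.eval_add, Polynomial.eval_one,
      Polynomial.eval_mul, Polynomial.eval_C, Polynomial.eval_pow, Polynomial.eval_X]
    by_cases h0 : k = 0
    · subst h0
      simp [hbit0, hz]
    · simp only [h0, if_false]
      obtain ⟨i, hi, -⟩ := Nat.exists_most_significant_bit h0
      have hilt : i < N - 1 := by
        by_contra hcon
        have : k < 2 ^ i := lt_of_lt_of_le (Finset.mem_range.mp hk)
          (Nat.pow_le_pow_right (by norm_num) (le_of_not_gt hcon))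
        exact absurd (Nat.testBit_eq_false_of_lt this) (by simp [hi])
      refine Finset.prod_eq_zero (Finset.mem_range.mpr hilt) ?_
      simp [bitd, hi, hz]
  have hsum : ∀ (z : ℤ), (∀ m : ℕ, z ^ (2 ^ (m + 1)) = 1) →
      (BPoly N u v).eval z = (-1 : ℤ) ^ bitd u 0 * z ^ bitd v 0 * 2 ^ (N - 1) := by
    intro z hz
    simp only [BPoly, Polynomial.eval_finset_sum, Polynomial.eval_mul, Polynomial.eval_C,
      Polynomial.eval_pow, Polynomial.eval_X]
    rw [Finset.sum_eq_single_of_mem 0 (Finset.mem_range.mpr (pow_pos (by norm_num : (0:ℕ) < 2) _))]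
    · rw [hs z hz 0 (Finset.mem_range.mpr (pow_pos (by norm_num : (0:ℕ) < 2) _))]
      simp
    · intro k hk hk0
      rw [hs z hz k hk]
      simp [hk0]
  have h1 : ∀ m : ℕ, (1 : ℤ) ^ (2 ^ (m + 1)) = 1 := fun m => one_pow _
  have hm1 : ∀ m : ℕ, (-1 : ℤ) ^ (2 ^ (m + 1)) = 1 := fun m =>
    Even.neg_one_pow ⟨2 ^ m, by rw [pow_succ]; ring⟩
  refine ⟨?_, ?_, ?_⟩
  · rw [hsum 1 h1]; ring
  · rw [hsum (-1) hm1]; ring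
  · simp only [BPoly, Polynomial.eval_finset_sum, Polynomial.eval_mul, Polynomial.eval_C,
      Polynomial.eval_pow, Polynomial.eval_X]
    refine Finset.sum_congr rfl fun k hk => ?_
    have hs0 : (sPoly N k).eval 0 = 1 := by
      simp only [sPoly, Polynomial.eval_prod, Polynomial.eval_add, Polynomial.eval_one,
        Polynomial.eval_mul, Polynomial.eval_C, Polynomial.eval_pow, Polynomial.eval_X]
      refine Finset.prod_eq_one fun i _ => ?_
      rw [zero_pow (pow_pos (by norm_num : (0:ℕ) < 2) (i+1)).ne']
      ring
    rw [hs0]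
    unfold bitd
    by_cases h : v.testBit k <;> simp [h]
end

section
/- Let N ≥ 1 and 0 ≤ u, v < 2^{2^{N−1}}. Then −B_{uv}^{(N)}(z) = B_{û v}^{(N)}(z), where û := 2^{2^{N−1}} − 1 − u is the bitwise complement of u in 2^{N−1} bits, and B_{uv}^{(N)}(−z) = B_{u⊕v, v}^{(N)}(z), where u ⊕ v denotes the bitwise exclusive-or of u and v. -/
open Polynomial

lemma neg_one_pow_bitd (n i : ℕ) : (-1 : ℤ) ^ bitd n i = if n.testBit i then -1 else 1 := by
  unfold bitd
  split_ifs <;> simp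

lemma neg_one_pow_bitd_xor (m n i : ℕ) :
    (-1 : ℤ) ^ bitd (m ^^^ n) i = (-1) ^ bitd m i * (-1) ^ bitd n i := by
  simp only [neg_one_pow_bitd, Nat.testBit_xor]
  cases m.testBit i <;> cases n.testBit i <;> simp

lemma testBit_two_pow_sub_one_sub {m n i : ℕ} (hn : n < 2 ^ m) (hi : i < m) :
    (2 ^ m - 1 - n).testBit i = !n.testBit i := by
  rw [Nat.sub_sub, Nat.add_comm, Nat.testBit_two_pow_sub_succ hn]
  simp [hi]

lemma neg_one_pow_bitd_two_pow_sub_one_sub {m n i : ℕ} (hn : n < 2 ^ m) (hi : i < m) :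
    (-1 : ℤ) ^ bitd (2 ^ m - 1 - n) i = -(-1) ^ bitd n i := by
  simp only [neg_one_pow_bitd, testBit_two_pow_sub_one_sub hn hi]
  cases n.testBit i <;> simp

lemma sPoly_comp_neg_X (N k : ℕ) : (sPoly N k).comp (-X) = sPoly N k := by
  rw [sPoly, prod_comp]
  refine Finset.prod_congr rfl fun i _ => ?_
  have heven : Even (2 ^ (i + 1)) := (Nat.even_pow' i.succ_ne_zero).2 even_two
  simp [heven.neg_pow]

lemma neg_BPoly {N u : ℕ} (v : ℕ) (hu : u < 2 ^ 2 ^ (N - 1)) :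
    -BPoly N u v = BPoly N (2 ^ 2 ^ (N - 1) - 1 - u) v := by
  rw [BPoly, BPoly, ← Finset.sum_neg_distrib]
  refine Finset.sum_congr rfl fun k hk => ?_
  rw [neg_one_pow_bitd_two_pow_sub_one_sub hu (Finset.mem_range.mp hk), C_neg, neg_mul, neg_mul]

lemma BPoly_comp_neg_X (N u v : ℕ) : (BPoly N u v).comp (-X) = BPoly N (u ^^^ v) v := by
  rw [BPoly, BPoly, sum_comp]
  refine Finset.sum_congr rfl fun k _ => ?_
  rw [mul_comp, mul_comp, C_comp, X_pow_comp, sPoly_comp_neg_X, neg_pow (X : ℤ[X]),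
    neg_one_pow_bitd_xor]
  simp only [C_mul, C_pow, C_neg, C_1]
  ring

theorem stmt13_general (N u v : ℕ)
    (hu : u < 2 ^ 2 ^ (N - 1)) :
    -BPoly N u v = BPoly N (2 ^ 2 ^ (N - 1) - 1 - u) v ∧
    (BPoly N u v).comp (-Polynomial.X) = BPoly N (u ^^^ v) v :=
  ⟨neg_BPoly v hu, BPoly_comp_neg_X N u v⟩

/-- For `N ≥ 1` and `u, v < 2^{2^{N-1}}`:
`-B_{uv}^{(N)}(z) = B_{ûv}^{(N)}(z)` where `û = 2^{2^{N-1}} - 1 - u` is the bitwise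
complement of `u` in `2^{N-1}` bits, and `B_{uv}^{(N)}(-z) = B_{u⊕v, v}^{(N)}(z)`
where `⊕` is bitwise exclusive-or. -/
theorem stmt13 (N u v : ℕ) (hN : 1 ≤ N)
    (hu : u < 2 ^ 2 ^ (N - 1)) (hv : v < 2 ^ 2 ^ (N - 1)) :
    -BPoly N u v = BPoly N (2 ^ 2 ^ (N - 1) - 1 - u) v ∧
    (BPoly N u v).comp (-Polynomial.X) = BPoly N (u ^^^ v) v :=
  stmt13_general N u v hu
end

section
/- Let N ≥ 1 and 0 ≤ u, v < 2^{2^{N−1}}. The polynomial B_{uv}^{(N)}(z) is an even polynomial (i.e. B_{uv}^{(N)}(−z) = B_{uv}^{(N)}(z)) if and only if v = 0, and it is an odd polynomial (i.e. B_{uv}^{(N)}(−z) = −B_{uv}^{(N)}(z)) if and only if v = 2^{2^{N−1}} − 1. -/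
open Polynomial Finset

/-- Auxiliary: `sPoly` with explicit length parameter. -/
noncomputable def sP (n k : ℕ) : Polynomial ℤ :=
  ∏ i ∈ Finset.range n, (1 + C ((-1 : ℤ) ^ bitd k i) * X ^ (2 ^ (i + 1)))

lemma sPoly_eq_sP (N k : ℕ) : sPoly N k = sP (N - 1) k := rfl

lemma sP_natDegree_lt (n k : ℕ) : (sP n k).natDegree < 2 ^ (n + 1) := by
  induction n with
  | zero => simp [sP]
  | succ n ih =>
    have h1 : sP (n + 1) k = sP n k * (1 + C ((-1 : ℤ) ^ bitd k n) * X ^ (2 ^ (n + 1))) := by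
      rw [sP, sP, prod_range_succ]
    have hf : (1 + C ((-1 : ℤ) ^ bitd k n) * X ^ (2 ^ (n + 1))).natDegree ≤ 2 ^ (n + 1) := by
      refine (natDegree_add_le _ _).trans ?_
      simp only [natDegree_one, max_le_iff]
      exact ⟨Nat.zero_le _, (natDegree_C_mul_le _ _).trans (by simp)⟩
    have hmul := natDegree_mul_le (p := sP n k)
      (q := 1 + C ((-1 : ℤ) ^ bitd k n) * X ^ (2 ^ (n + 1)))
    have h2 : (2 : ℕ) ^ (n + 1 + 1) = 2 ^ (n + 1) + 2 ^ (n + 1) := by ring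
    rw [h1]
    omega

lemma split_zero (P Q : Polynomial ℤ) (d : ℕ) (hP : P.natDegree < d) (hQ : Q.natDegree < d)
    (h : P + X ^ d * Q = 0) : P = 0 ∧ Q = 0 := by
  have hP0 : P = 0 := by
    ext i
    by_cases hi : i < d
    · have h0 : (P + X ^ d * Q).coeff i = 0 := by rw [h]; simp
      rwa [coeff_add, X_pow_mul, coeff_mul_X_pow', if_neg (by omega), add_zero] at h0
    · have : P.natDegree < i := by omega
      simp [Polynomial.coeff_eq_zero_of_natDegree_lt this]
  refine ⟨hP0, ?_⟩
  rw [hP0, zero_add] at h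
  exact (mul_eq_zero.mp h).resolve_left (pow_ne_zero _ X_ne_zero)

lemma sP_high (n j : ℕ) (hj : j < 2 ^ n) : sP n (2 ^ n + j) = sP n j := by
  unfold sP
  refine Finset.prod_congr rfl fun i hi => ?_
  rw [Finset.mem_range] at hi
  rw [bitd, bitd, Nat.testBit_two_pow_add_gt hi]

lemma bitd_low (n j : ℕ) (hj : j < 2 ^ n) : bitd j n = 0 := by
  rw [bitd, Nat.testBit_lt_two_pow hj]; rfl

lemma bitd_high (n j : ℕ) (hj : j < 2 ^ n) : bitd (2 ^ n + j) n = 1 := by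
  rw [bitd, Nat.testBit_two_pow_add_eq, Nat.testBit_lt_two_pow hj]; rfl

lemma deg_sum_bound (n : ℕ) (c : ℕ → ℤ) :
    (∑ j ∈ range (2 ^ n), C (c j) * sP n j).natDegree ≤ 2 ^ (n + 1) - 1 := by
  refine natDegree_sum_le_of_forall_le _ _ fun j _ => ?_
  have h1 := sP_natDegree_lt n j
  exact (natDegree_C_mul_le _ _).trans (by omega)

/-- Linear independence of the `sP n k`, `k < 2^n`, over ℤ. -/
lemma indep : ∀ (n : ℕ) (c : ℕ → ℤ),
    (∑ k ∈ range (2 ^ n), C (c k) * sP n k) = 0 → ∀ k < 2 ^ n, c k = 0 := by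
  intro n
  induction n with
  | zero =>
    intro c h k hk
    interval_cases k
    simpa [sP] using h
  | succ n ih =>
    intro c h k hk
    have hre : range (2 ^ (n + 1)) = range (2 ^ n + 2 ^ n) := by
      rw [show 2 ^ (n + 1) = 2 ^ n + 2 ^ n from by ring]
    have hlow : ∀ j < 2 ^ n, sP (n + 1) j = sP n j * (1 + X ^ (2 ^ (n + 1))) := by
      intro j hj
      rw [sP, prod_range_succ, bitd_low n j hj]
      simp [sP]
    have hhigh : ∀ j < 2 ^ n, sP (n + 1) (2 ^ n + j) = sP n j * (1 - X ^ (2 ^ (n + 1))) := by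
      intro j hj
      rw [sP, prod_range_succ, bitd_high n j hj]
      have h2 : (∏ i ∈ range n, (1 + C ((-1 : ℤ) ^ bitd (2 ^ n + j) i) * X ^ (2 ^ (i + 1))))
          = sP n j := by rw [← sP_high n j hj]; rfl
      rw [h2]
      simp only [pow_one, map_neg, map_one]
      ring
    set A : Polynomial ℤ := ∑ j ∈ range (2 ^ n), C (c j) * sP n j with hA
    set B : Polynomial ℤ := ∑ j ∈ range (2 ^ n), C (c (2 ^ n + j)) * sP n j with hB
    have h' : A * (1 + X ^ (2 ^ (n + 1))) + B * (1 - X ^ (2 ^ (n + 1))) = 0 := by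
      rw [← h, hre, Finset.sum_range_add, hA, hB, Finset.sum_mul, Finset.sum_mul,
        ← Finset.sum_add_distrib, ← Finset.sum_add_distrib]
      refine Finset.sum_congr rfl fun j hj => ?_
      rw [Finset.mem_range] at hj
      rw [hlow j hj, hhigh j hj]
      ring
    have hApos : (0:ℕ) < 2 ^ (n + 1) := Nat.pow_pos (by norm_num)
    have hAd : (A + B).natDegree < 2 ^ (n + 1) := by
      have h1 : A.natDegree ≤ 2 ^ (n + 1) - 1 := hA ▸ deg_sum_bound n c
      have h2 : B.natDegree ≤ 2 ^ (n + 1) - 1 := hB ▸ deg_sum_bound n (fun j => c (2 ^ n + j))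
      have := natDegree_add_le A B
      omega
    have hBd : (A - B).natDegree < 2 ^ (n + 1) := by
      have h1 : A.natDegree ≤ 2 ^ (n + 1) - 1 := hA ▸ deg_sum_bound n c
      have h2 : B.natDegree ≤ 2 ^ (n + 1) - 1 := hB ▸ deg_sum_bound n (fun j => c (2 ^ n + j))
      have := natDegree_sub_le A B
      omega
    have h'' : (A + B) + X ^ (2 ^ (n + 1)) * (A - B) = 0 := by rw [← h']; ring
    obtain ⟨hs, hd⟩ := split_zero _ _ _ hAd hBd h''
    have hsum : ∀ j < 2 ^ n, c j + c (2 ^ n + j) = 0 := by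
      refine ih (fun j => c j + c (2 ^ n + j)) ?_
      rw [← hs, hA, hB, ← Finset.sum_add_distrib]
      exact Finset.sum_congr rfl fun j _ => by rw [map_add]; ring
    have hdiff : ∀ j < 2 ^ n, c j - c (2 ^ n + j) = 0 := by
      refine ih (fun j => c j - c (2 ^ n + j)) ?_
      rw [← hd, hA, hB, ← Finset.sum_sub_distrib]
      exact Finset.sum_congr rfl fun j _ => by rw [map_sub]; ring
    by_cases hk' : k < 2 ^ n
    · have := hsum k hk'; have := hdiff k hk'; omega
    · have hj : k - 2 ^ n < 2 ^ n := by
        have : (2:ℕ) ^ (n + 1) = 2 ^ n + 2 ^ n := by ring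
        omega
      have h1 := hsum _ hj
      have h2 := hdiff _ hj
      rw [show 2 ^ n + (k - 2 ^ n) = k by omega] at h1 h2
      omega

lemma sP_comp_neg (n k : ℕ) : (sP n k).comp (-X) = sP n k := by
  unfold sP
  rw [Polynomial.prod_comp]
  refine Finset.prod_congr rfl fun i hi => ?_
  have heven : Even (2 ^ (i + 1)) := (Nat.even_pow).mpr ⟨even_two, by omega⟩
  simp [heven.neg_pow]

lemma BPoly_comp_neg (N u v : ℕ) : (BPoly N u v).comp (-X) =
    ∑ k ∈ Finset.range (2 ^ (N - 1)),
      C ((-1 : ℤ) ^ bitd u k) * (-X) ^ bitd v k * sPoly N k := by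
  unfold BPoly
  rw [Polynomial.sum_comp]
  refine Finset.sum_congr rfl fun k _ => ?_
  rw [mul_comp, mul_comp, C_comp, pow_comp, X_comp, sPoly_eq_sP, sP_comp_neg]

lemma comp_sub (N u v : ℕ) : (BPoly N u v).comp (-X) - BPoly N u v
    = X * ∑ k ∈ Finset.range (2 ^ (N - 1)),
        C ((-1 : ℤ) ^ bitd u k * ((-1) ^ bitd v k - 1)) * sPoly N k := by
  rw [BPoly_comp_neg, BPoly, ← Finset.sum_sub_distrib, Finset.mul_sum]
  refine Finset.sum_congr rfl fun k _ => ?_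
  by_cases hb : v.testBit k
  · simp only [bitd, if_pos hb, pow_one, map_mul, map_sub, map_add, map_one, map_pow, map_neg]
    ring
  · simp only [bitd, if_neg hb, pow_zero, map_mul, map_sub, map_add, map_one, map_pow, map_neg]
    ring

lemma comp_add (N u v : ℕ) : (BPoly N u v).comp (-X) + BPoly N u v
    = ∑ k ∈ Finset.range (2 ^ (N - 1)),
        C ((-1 : ℤ) ^ bitd u k * ((-1) ^ bitd v k + 1)) * sPoly N k := by
  rw [BPoly_comp_neg, BPoly, ← Finset.sum_add_distrib]
  refine Finset.sum_congr rfl fun k _ => ?_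
  by_cases hb : v.testBit k
  · simp only [bitd, if_pos hb, pow_one, map_mul, map_sub, map_add, map_one, map_pow, map_neg]
    ring
  · simp only [bitd, if_neg hb, pow_zero, map_mul, map_sub, map_add, map_one, map_pow, map_neg]
    ring

/-- For `N ≥ 1` and `u, v < 2^{2^{N-1}}`, the polynomial `B_{uv}^{(N)}`
is even (`B(-z) = B(z)`) iff `v = 0`, and odd (`B(-z) = -B(z)`) iff
`v = 2^{2^{N-1}} - 1`. -/
theorem stmt14 (N u v : ℕ) (hN : 1 ≤ N)
    (hu : u < 2 ^ 2 ^ (N - 1)) (hv : v < 2 ^ 2 ^ (N - 1)) :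
    ((BPoly N u v).comp (-Polynomial.X) = BPoly N u v ↔ v = 0) ∧
    ((BPoly N u v).comp (-Polynomial.X) = -BPoly N u v ↔ v = 2 ^ 2 ^ (N - 1) - 1) := by
  constructor
  · constructor
    · intro h
      have hz : (X : Polynomial ℤ) * ∑ k ∈ Finset.range (2 ^ (N - 1)),
          C ((-1 : ℤ) ^ bitd u k * ((-1) ^ bitd v k - 1)) * sPoly N k = 0 := by
        rw [← comp_sub, h, sub_self]
      have hQ : (∑ k ∈ Finset.range (2 ^ (N - 1)),
          C ((-1 : ℤ) ^ bitd u k * ((-1) ^ bitd v k - 1)) * sP (N - 1) k) = 0 := by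
        have := (mul_eq_zero.mp hz).resolve_left X_ne_zero
        simpa [sPoly_eq_sP] using this
      have hcoef := indep (N - 1) _ hQ
      have hbit : ∀ k < 2 ^ (N - 1), v.testBit k = false := by
        intro k hk
        have h0 := hcoef k hk
        have hne : ((-1 : ℤ)) ^ bitd u k ≠ 0 := pow_ne_zero _ (by norm_num)
        have h1 : ((-1 : ℤ)) ^ bitd v k - 1 = 0 :=
          (mul_eq_zero.mp h0).resolve_left hne
        by_contra hb
        rw [Bool.not_eq_false] at hb
        rw [bitd, if_pos hb] at h1
        norm_num at h1
      refine Nat.eq_of_testBit_eq fun i => ?_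
      rw [Nat.zero_testBit]
      by_cases hi : i < 2 ^ (N - 1)
      · exact hbit i hi
      · exact Nat.testBit_lt_two_pow
          (lt_of_lt_of_le hv (Nat.pow_le_pow_right (by norm_num) (by omega)))
    · intro hv0
      subst hv0
      have hz : (BPoly N u 0).comp (-X) - BPoly N u 0 = 0 := by
        rw [comp_sub, Finset.sum_eq_zero, mul_zero]
        intro k _
        simp [bitd]
      linear_combination hz
  · constructor
    · intro h
      have hQ : (∑ k ∈ Finset.range (2 ^ (N - 1)),
          C ((-1 : ℤ) ^ bitd u k * ((-1) ^ bitd v k + 1)) * sP (N - 1) k) = 0 := by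
        have h0 : (BPoly N u v).comp (-X) + BPoly N u v = 0 := by rw [h]; ring
        rw [comp_add] at h0
        simpa [sPoly_eq_sP] using h0
      have hcoef := indep (N - 1) _ hQ
      have hbit : ∀ k < 2 ^ (N - 1), v.testBit k = true := by
        intro k hk
        have h0 := hcoef k hk
        have hne : ((-1 : ℤ)) ^ bitd u k ≠ 0 := pow_ne_zero _ (by norm_num)
        have h1 : ((-1 : ℤ)) ^ bitd v k + 1 = 0 :=
          (mul_eq_zero.mp h0).resolve_left hne
        by_contra hb
        rw [Bool.not_eq_true] at hb
        rw [bitd, if_neg (by simp [hb])] at h1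
        norm_num at h1
      refine Nat.eq_of_testBit_eq fun i => ?_
      rw [Nat.testBit_two_pow_sub_one]
      by_cases hi : i < 2 ^ (N - 1)
      · simp [hbit i hi, hi]
      · have hf : v.testBit i = false := Nat.testBit_lt_two_pow
          (lt_of_lt_of_le hv (Nat.pow_le_pow_right (by norm_num) (by omega)))
        simp [hf, hi]
    · intro hveq
      subst hveq
      have hz : (BPoly N u (2 ^ 2 ^ (N - 1) - 1)).comp (-X)
          + BPoly N u (2 ^ 2 ^ (N - 1) - 1) = 0 := by
        rw [comp_add, Finset.sum_eq_zero]
        intro k hk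
        rw [Finset.mem_range] at hk
        have hb : (2 ^ 2 ^ (N - 1) - 1).testBit k = true := by
          rw [Nat.testBit_two_pow_sub_one]
          simpa using hk
        simp [bitd, hb]
      linear_combination hz
end

section
/- Let N ≥ 1 and 0 ≤ u, v < 2^{2^{N−1}}, and write B_{uv}^{(N)}(z) = ∑_{k=0}^{2^N−1} b_k z^k. If u = 0, then b_0 = 2^{N−1} − b_1 and b_{2j} = −b_{2j+1} for all 1 ≤ j ≤ 2^{N−1} − 1. If v = 0, then b_{2j+1} = 0 for all 0 ≤ j ≤ 2^{N−1} − 1. -/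
/-!
Every `s_k^{(N)}` is a polynomial in `z²`, so it has no odd coefficients. Hence if `v = 0` the
Bell polynomial, a signed sum of the `s_k`, has no odd coefficients either. If `u = 0` then each
summand is `z^{v_k} s_k` with `v_k ∈ {0, 1}`, so the coefficient of `z^{2j}` of `s_k` lands in
exactly one of the slots `2j`, `2j + 1`; thus `b_{2j} + b_{2j+1}` is the coefficient of `z^{2j}`
of `∑_k s_k`. Expanding the product over the bits of `k`, that sum is
`∏_i ((1 + z^{2^{i+1}}) + (1 - z^{2^{i+1}})) = 2^{N-1}`.
-/

open Polynomial Finset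

@[simp]
lemma bitd_zero_left (i : ℕ) : bitd 0 i = 0 := by
  simp [bitd]

lemma bitd_two_pow_add_of_lt {m k i : ℕ} (hi : i < m) : bitd (2 ^ m + k) i = bitd k i := by
  simp [bitd, Nat.testBit_two_pow_add_gt hi k]

lemma bitd_of_lt_two_pow {m k : ℕ} (hk : k < 2 ^ m) : bitd k m = 0 := by
  simp [bitd, Nat.testBit_lt_two_pow hk]

lemma bitd_two_pow_add_self {m k : ℕ} (hk : k < 2 ^ m) : bitd (2 ^ m + k) m = 1 := by
  simp [bitd, Nat.testBit_two_pow_add_eq, Nat.testBit_lt_two_pow hk]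

lemma sum_range_two_pow_prod_bitd {R : Type*} [CommSemiring R] (m : ℕ) (g : ℕ → ℕ → R) :
    ∑ k ∈ range (2 ^ m), ∏ i ∈ range m, g (bitd k i) i = ∏ i ∈ range m, (g 0 i + g 1 i) := by
  induction m with
  | zero => simp
  | succ m ih =>
    have low : ∀ k ∈ range (2 ^ m),
        ∏ i ∈ range (m + 1), g (bitd k i) i = (∏ i ∈ range m, g (bitd k i) i) * g 0 m := by
      intro k hk
      rw [prod_range_succ, bitd_of_lt_two_pow (mem_range.mp hk)]
    have high : ∀ k ∈ range (2 ^ m),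
        ∏ i ∈ range (m + 1), g (bitd (2 ^ m + k) i) i =
          (∏ i ∈ range m, g (bitd k i) i) * g 1 m := by
      intro k hk
      rw [prod_range_succ, bitd_two_pow_add_self (mem_range.mp hk)]
      congr 1
      exact prod_congr rfl fun i hi => by rw [bitd_two_pow_add_of_lt (mem_range.mp hi)]
    rw [pow_succ, mul_two, sum_range_add, sum_congr rfl low, sum_congr rfl high,
      ← sum_mul, ← sum_mul, ← mul_add, ih, prod_range_succ]

lemma sPoly_eq_expand (N k : ℕ) :
    sPoly N k = expand ℤ 2 (∏ i ∈ range (N - 1), (1 + C ((-1 : ℤ) ^ bitd k i) * X ^ 2 ^ i)) := by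
  simp only [sPoly, map_prod, map_add, map_mul, map_one, expand_C, map_pow, expand_X, ← pow_mul,
    ← pow_succ']

lemma sPoly_coeff_odd (N k j : ℕ) : (sPoly N k).coeff (2 * j + 1) = 0 := by
  rw [sPoly_eq_expand, coeff_expand two_pos, if_neg (by omega)]

lemma sum_sPoly (N : ℕ) : ∑ k ∈ range (2 ^ (N - 1)), sPoly N k = C (2 ^ (N - 1)) := by
  simp only [sPoly]
  rw [sum_range_two_pow_prod_bitd (N - 1) fun b i => 1 + C ((-1 : ℤ) ^ b) * X ^ 2 ^ (i + 1)]
  have pair : ∀ i ∈ range (N - 1),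
      (1 + C ((-1 : ℤ) ^ 0) * X ^ 2 ^ (i + 1)) + (1 + C ((-1 : ℤ) ^ 1) * X ^ 2 ^ (i + 1)) =
        C 2 := by
    intro i _
    simp only [pow_zero, pow_one, map_one, map_neg, C_ofNat]
    ring
  rw [prod_congr rfl pair, prod_const, card_range, ← map_pow]

lemma coeff_X_pow_mul_add_coeff_succ {R : Type*} [Semiring R] {q : R[X]}
    (hq : ∀ j, q.coeff (2 * j + 1) = 0) {e : ℕ} (he : e ≤ 1) (j : ℕ) :
    (X ^ e * q).coeff (2 * j) + (X ^ e * q).coeff (2 * j + 1) = q.coeff (2 * j) := by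
  interval_cases e
  · simp [hq]
  · rw [pow_one, coeff_X_mul]
    rcases j with _ | j
    · simp
    · rw [show 2 * (j + 1) = 2 * j + 1 + 1 by ring, coeff_X_mul, hq, zero_add]

lemma BPoly_coeff_odd_of_right_eq_zero (N u j : ℕ) : (BPoly N u 0).coeff (2 * j + 1) = 0 := by
  rw [BPoly, finsetSum_coeff]
  refine sum_eq_zero fun k _ => ?_
  rw [bitd_zero_left, pow_zero, mul_one, coeff_C_mul, sPoly_coeff_odd, mul_zero]

lemma BPoly_coeff_add_coeff_succ_of_left_eq_zero (N v j : ℕ) :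
    (BPoly N 0 v).coeff (2 * j) + (BPoly N 0 v).coeff (2 * j + 1) =
      (C ((2 : ℤ) ^ (N - 1))).coeff (2 * j) := by
  rw [← sum_sPoly, BPoly, finsetSum_coeff, finsetSum_coeff, finsetSum_coeff,
    ← sum_add_distrib]
  refine sum_congr rfl fun k _ => ?_
  simp only [bitd_zero_left, pow_zero, map_one, one_mul]
  exact coeff_X_pow_mul_add_coeff_succ (sPoly_coeff_odd N k) (bitd_le_one v k) j

theorem stmt15_general (N u v : ℕ) :
    (u = 0 →
      (BPoly N u v).coeff 0 = 2 ^ (N - 1) - (BPoly N u v).coeff 1 ∧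
      ∀ j, 1 ≤ j → j ≤ 2 ^ (N - 1) - 1 →
        (BPoly N u v).coeff (2 * j) = -(BPoly N u v).coeff (2 * j + 1)) ∧
    (v = 0 → ∀ j ≤ 2 ^ (N - 1) - 1, (BPoly N u v).coeff (2 * j + 1) = 0) := by
  refine ⟨?_, fun hv j _ => hv ▸ BPoly_coeff_odd_of_right_eq_zero N u j⟩
  rintro rfl
  constructor
  · have h := BPoly_coeff_add_coeff_succ_of_left_eq_zero N v 0
    rw [mul_zero, coeff_C_zero] at h
    linarith
  · intro j hj _
    have h := BPoly_coeff_add_coeff_succ_of_left_eq_zero N v j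
    rw [coeff_C, if_neg (by omega)] at h
    linarith

/-- For `N ≥ 1`, `u, v < 2^{2^{N-1}}`, write `b_k` for the coefficients
of `B_{uv}^{(N)}`. If `u = 0` then `b_0 = 2^{N-1} - b_1` and `b_{2j} = -b_{2j+1}` for
`1 ≤ j ≤ 2^{N-1} - 1`; if `v = 0` then `b_{2j+1} = 0` for `0 ≤ j ≤ 2^{N-1} - 1`. -/
theorem stmt15 (N u v : ℕ) (hN : 1 ≤ N)
    (hu : u < 2 ^ 2 ^ (N - 1)) (hv : v < 2 ^ 2 ^ (N - 1)) :
    (u = 0 →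
      (BPoly N u v).coeff 0 = 2 ^ (N - 1) - (BPoly N u v).coeff 1 ∧
      ∀ j, 1 ≤ j → j ≤ 2 ^ (N - 1) - 1 →
        (BPoly N u v).coeff (2 * j) = -(BPoly N u v).coeff (2 * j + 1)) ∧
    (v = 0 → ∀ j ≤ 2 ^ (N - 1) - 1, (BPoly N u v).coeff (2 * j + 1) = 0) :=
  stmt15_general N u v
end
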